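/- arXiv:1907.02368 — 3 statements merged into one kernel-verified Lean document; each statement's English description precedes it below -/
import Mathlib

section
/- For any convex body K ⊆ ℝⁿ, convex function h : ℝⁿ → ℝ, and temperature T > 0, if X is distributed on K with density proportional to x ↦ exp(−h(x)/T), then E[h(X)] ≤ nT + min_{x ∈ K} h(x). -/
open MeasureTheory Set Real Filter Topology Module

/-!
Put `Z(β) = ∫_K exp (-β g)` for a convex `g` with `g x₀ ≤ 0` at some `x₀ ∈ K`. For `β₁ ≤ β₂`,
the homothety of ratio `β₁ / β₂` centred at `x₀` maps `K` into itself, and by convexity `β₂ g`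
at the image of `y` is at most `β₁ g y`; the change of variables formula then shows that
`β ↦ β ^ n Z(β)` is nondecreasing. Since `exp (-β g) ≥ exp (-g) (1 + (1 - β) g)`, this gives
`β ^ n (Z(1) + (1 - β) ∫_K g exp (-g)) ≤ Z(1)` for `β < 1`, and comparing derivatives at `β = 1`
yields `∫_K g exp (-g) ≤ n Z(1)`. Apply this to `g = (h - h x₀) / T` for every `x₀ ∈ K`.
-/

theorem le_natCast_mul_of_forall_pow_mul_le {n : ℕ} {Z N : ℝ}
    (h : ∀ β ∈ Ioo (0 : ℝ) 1, β ^ n * (Z + (1 - β) * N) ≤ Z) : N ≤ n * Z := by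
  set φ : ℝ → ℝ := fun β => β ^ n * (Z + (1 - β) * N)
  have hφ : HasDerivAt φ (n * Z - N) 1 :=
    ((hasDerivAt_pow n (1 : ℝ)).mul
      ((((hasDerivAt_id' (1 : ℝ)).const_sub 1).mul_const N).const_add Z)).congr_deriv
      (by simp; ring)
  have hslope : ∀ᶠ t in 𝓝[<] (0 : ℝ), 0 ≤ t⁻¹ • (φ (1 + t) - φ 1) := by
    filter_upwards [Ioo_mem_nhdsLT (show (-1 : ℝ) < 0 by norm_num)] with t ht
    have hφt : φ (1 + t) ≤ φ 1 := by
      simpa [φ] using h (1 + t) ⟨by linarith [ht.1], by linarith [ht.2]⟩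
    exact smul_nonneg_of_nonpos_of_nonpos (inv_nonpos.2 ht.2.le) (sub_nonpos.2 hφt)
  linarith [ge_of_tendsto hφ.tendsto_slope_zero_left hslope]

section

variable {E : Type*} [NormedAddCommGroup E] [NormedSpace ℝ E] [FiniteDimensional ℝ E]
  [MeasurableSpace E] [BorelSpace E] (μ : Measure E) [μ.IsAddHaarMeasure]

theorem setIntegral_image_homothety (x₀ : E) {c : ℝ} (hc : c ≠ 0) {s : Set E}
    (hs : MeasurableSet s) (f : E → ℝ) :
    ∫ x in AffineMap.homothety x₀ c '' s, f x ∂μ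
      = |c| ^ finrank ℝ E * ∫ x in s, f (AffineMap.homothety x₀ c x) ∂μ := by
  have hderiv : ∀ x, HasFDerivAt (AffineMap.homothety x₀ c)
      (c • ContinuousLinearMap.id ℝ E) x := fun x => by
    have : (AffineMap.homothety x₀ c : E → E) = fun y => c • (y - x₀) + x₀ := by
      funext y; simp [AffineMap.homothety_apply]
    rw [this]
    exact (((hasFDerivAt_id x).sub_const x₀).const_smul c).add_const x₀
  rw [integral_image_eq_integral_abs_det_fderiv_smul μ hs
    (fun x _ => (hderiv x).hasFDerivWithinAt) (AffineMap.homothety_injective x₀ hc).injOn,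
    ← integral_const_mul]
  simp [ContinuousLinearMap.det, LinearMap.det_smul, abs_pow]

variable {μ} {K : Set E} {g : E → ℝ} {x₀ : E}

theorem pow_mul_setIntegral_exp_neg_mul_le (hKc : IsCompact K) (hg : ConvexOn ℝ K g)
    (hgc : ContinuousOn g K) (hx₀ : x₀ ∈ K) (hgx₀ : g x₀ ≤ 0) {β₁ β₂ : ℝ} (hβ₁ : 0 < β₁)
    (hβ : β₁ ≤ β₂) :
    β₁ ^ finrank ℝ E * ∫ x in K, exp (-(β₁ * g x)) ∂μ
      ≤ β₂ ^ finrank ℝ E * ∫ x in K, exp (-(β₂ * g x)) ∂μ := by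
  have hβ₂ : 0 < β₂ := hβ₁.trans_le hβ
  set c := β₁ / β₂
  have hc : c ∈ Icc (0 : ℝ) 1 := ⟨by positivity, (div_le_one hβ₂).2 hβ⟩
  have hβc : β₂ * c = β₁ := mul_div_cancel₀ β₁ hβ₂.ne'
  set H := AffineMap.homothety x₀ c
  have hHK : MapsTo H K K := fun y hy => by
    simpa [H, AffineMap.homothety_eq_lineMap] using hg.1.lineMap_mem hx₀ hy hc
  have hHg : ∀ y ∈ K, β₂ * g (H y) ≤ β₁ * g y := fun y hy => by
    have hconv := hg.2 hx₀ hy (sub_nonneg.2 hc.2) hc.1 (sub_add_cancel 1 c)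
    rw [← AffineMap.lineMap_apply_module, ← AffineMap.homothety_eq_lineMap] at hconv
    change g (H y) ≤ (1 - c) * g x₀ + c * g y at hconv
    calc β₂ * g (H y) ≤ β₂ * ((1 - c) * g x₀ + c * g y) := by gcongr
      _ = β₂ * (1 - c) * g x₀ + β₁ * g y := by rw [← hβc]; ring
      _ ≤ β₁ * g y := add_le_of_nonpos_left
        (mul_nonpos_of_nonneg_of_nonpos (mul_nonneg hβ₂.le (sub_nonneg.2 hc.2)) hgx₀)
  have hKm : MeasurableSet K := hKc.isClosed.measurableSet
  have hgH : ContinuousOn (fun x => g (H x)) K :=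
    hgc.comp (AffineMap.homothety_continuous x₀ c).continuousOn hHK
  have hint : IntegrableOn (fun x => exp (-(β₂ * g x))) K μ :=
    ContinuousOn.integrableOn_compact hKc (by fun_prop)
  calc β₁ ^ finrank ℝ E * ∫ x in K, exp (-(β₁ * g x)) ∂μ
      = β₂ ^ finrank ℝ E * (c ^ finrank ℝ E * ∫ x in K, exp (-(β₁ * g x)) ∂μ) := by
        rw [← mul_assoc, ← mul_pow, hβc]
    _ ≤ β₂ ^ finrank ℝ E * (c ^ finrank ℝ E * ∫ x in K, exp (-(β₂ * g (H x))) ∂μ) := by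
        gcongr ?_ * (?_ * ?_)
        exact setIntegral_mono_on (ContinuousOn.integrableOn_compact hKc (by fun_prop))
          (ContinuousOn.integrableOn_compact hKc (by fun_prop)) hKm
          fun y hy => exp_le_exp.2 (neg_le_neg (hHg y hy))
    _ = β₂ ^ finrank ℝ E * ∫ x in H '' K, exp (-(β₂ * g x)) ∂μ := by
        rw [setIntegral_image_homothety μ x₀ (div_pos hβ₁ hβ₂).ne' hKm, abs_of_nonneg hc.1]
    _ ≤ β₂ ^ finrank ℝ E * ∫ x in K, exp (-(β₂ * g x)) ∂μ := by
        refine mul_le_mul_of_nonneg_left ?_ (by positivity)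
        exact setIntegral_mono_set hint (ae_of_all _ fun _ => (exp_pos _).le) hHK.image_subset.eventuallyLE

theorem setIntegral_mul_exp_neg_le (hKc : IsCompact K) (hg : ConvexOn ℝ K g)
    (hgc : ContinuousOn g K) (hx₀ : x₀ ∈ K) (hgx₀ : g x₀ ≤ 0) :
    ∫ x in K, g x * exp (-g x) ∂μ ≤ finrank ℝ E * ∫ x in K, exp (-g x) ∂μ := by
  refine le_natCast_mul_of_forall_pow_mul_le fun β hβ => ?_
  have hint : ∀ φ : E → ℝ, ContinuousOn φ K → IntegrableOn φ K μ :=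
    fun φ hφ => hφ.integrableOn_compact hKc
  have hlin : ∫ x in K, exp (-g x) ∂μ + (1 - β) * ∫ x in K, g x * exp (-g x) ∂μ
      ≤ ∫ x in K, exp (-(β * g x)) ∂μ := by
    rw [← integral_const_mul, ← integral_add (hint (fun x => exp (-g x)) (by fun_prop))
      (hint (fun x => (1 - β) * (g x * exp (-g x))) (by fun_prop))]
    refine setIntegral_mono_on (hint _ (by fun_prop)) (hint _ (by fun_prop))
      hKc.isClosed.measurableSet fun y _ => ?_
    calc exp (-g y) + (1 - β) * (g y * exp (-g y)) = ((1 - β) * g y + 1) * exp (-g y) := by ring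
      _ ≤ exp ((1 - β) * g y) * exp (-g y) := by gcongr; exact add_one_le_exp _
      _ = exp (-(β * g y)) := by rw [← exp_add]; ring_nf
  have hscale := pow_mul_setIntegral_exp_neg_mul_le (μ := μ) hKc hg hgc hx₀ hgx₀ hβ.1 hβ.2.le
  simp only [one_pow, one_mul] at hscale
  exact (mul_le_mul_of_nonneg_left hlin (pow_nonneg hβ.1.le _)).trans hscale

theorem setIntegral_mul_exp_neg_div_le (hKc : IsCompact K) (hg : ConvexOn ℝ K g)
    (hgc : ContinuousOn g K) (hx₀ : x₀ ∈ K) {T : ℝ} (hT : 0 < T) :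
    ∫ x in K, g x * exp (-g x / T) ∂μ
      ≤ (finrank ℝ E * T + g x₀) * ∫ x in K, exp (-g x / T) ∂μ := by
  set f : E → ℝ := fun x => T⁻¹ • (g x + -g x₀)
  have hf : ConvexOn ℝ K f := (hg.add_const _).smul (inv_nonneg.2 hT.le)
  have hint : ∀ φ : E → ℝ, ContinuousOn φ K → IntegrableOn φ K μ :=
    fun φ hφ => hφ.integrableOn_compact hKc
  have hexp : ∀ x, exp (-g x / T) = exp (-g x₀ / T) * exp (-f x) := fun x => by
    rw [← exp_add]; congr 1; simp only [f, smul_eq_mul]; field_simp; ring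
  have hmul : ∀ x, g x * exp (-g x / T)
      = exp (-g x₀ / T) * (g x₀ * exp (-f x) + T * (f x * exp (-f x))) := fun x => by
    rw [hexp]; simp only [f, smul_eq_mul]; field_simp; ring
  have hZ : ∫ x in K, exp (-g x / T) ∂μ = exp (-g x₀ / T) * ∫ x in K, exp (-f x) ∂μ := by
    rw [← integral_const_mul]; exact integral_congr_ae (ae_of_all _ hexp)
  have hbound := setIntegral_mul_exp_neg_le (μ := μ) hKc hf (by fun_prop) hx₀
    (by simp only [f, add_neg_cancel, smul_zero, le_refl])
  simp_rw [hmul]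
  rw [hZ, integral_const_mul,
    integral_add (hint (fun x => g x₀ * exp (-f x)) (by fun_prop))
      (hint (fun x => T * (f x * exp (-f x))) (by fun_prop)),
    integral_const_mul, integral_const_mul]
  calc exp (-g x₀ / T) * (g x₀ * ∫ x in K, exp (-f x) ∂μ + T * ∫ x in K, f x * exp (-f x) ∂μ)
      ≤ exp (-g x₀ / T) * (g x₀ * ∫ x in K, exp (-f x) ∂μ
          + T * (finrank ℝ E * ∫ x in K, exp (-f x) ∂μ)) := by gcongr
    _ = _ := by ring

end

/-- Kalai-Vempala bound (extended to convex functions by De Klerk and Laurent): for a convex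
body `K ⊆ ℝⁿ`, a convex function `h` and temperature `T > 0`, the Boltzmann mean of `h`
satisfies `E[h(X)] ≤ nT + min_K h`. -/
theorem boltzmann_mean_le {n : ℕ} (K : Set (EuclideanSpace ℝ (Fin n)))
    (hKconv : Convex ℝ K) (hKcomp : IsCompact K) (hKint : (interior K).Nonempty)
    (h : EuclideanSpace ℝ (Fin n) → ℝ) (hconv : ConvexOn ℝ Set.univ h)
    (T : ℝ) (hT : 0 < T) :
    (∫ x in K, h x * Real.exp (-h x / T)) / (∫ x in K, Real.exp (-h x / T))
      ≤ n * T + sInf (h '' K) := by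
  have hcont : Continuous h := continuousOn_univ.1 (hconv.continuousOn isOpen_univ)
  have hKpos : volume K ≠ 0 :=
    ((isOpen_interior.measure_pos volume hKint).trans_le (measure_mono interior_subset)).ne'
  have : NeZero (volume.restrict K) := ⟨by simpa using hKpos⟩
  have hZ : 0 < ∫ x in K, exp (-h x / T) := integral_exp_pos
    ((by fun_prop : Continuous fun x => exp (-h x / T)).continuousOn.integrableOn_compact hKcomp)
  suffices hx₀ : ∀ x₀ ∈ K,
      (∫ x in K, h x * exp (-h x / T)) / (∫ x in K, exp (-h x / T)) - n * T ≤ h x₀ by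
    linarith [le_csInf ((hKint.mono interior_subset).image h) (forall_mem_image.2 hx₀)]
  intro x₀ hx₀
  rw [sub_le_iff_le_add', div_le_iff₀ hZ]
  simpa [finrank_euclideanSpace] using setIntegral_mul_exp_neg_div_le (μ := volume) hKcomp
    (hconv.subset (subset_univ K) hKconv) hcont.continuousOn hx₀ hT
end

section
/- Let K ⊆ ℝⁿ be a convex body, T > 0, c ∈ ℝⁿ with ‖c‖ = 1, and let X be distributed on K with density proportional to x ↦ exp(−⟨c,x⟩/T). Then for any ε̄ > 0, P{⟨c, X⟩ − min_{x∈K} ⟨c, x⟩ > ε̄} ≤ nT/ε̄. -/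
open MeasureTheory Filter
open scoped RealInnerProductSpace

lemma bm_scale {n : ℕ} {K : Set (EuclideanSpace ℝ (Fin n))} (hKconv : Convex ℝ K)
    (hKcomp : IsCompact K) {x₀ : EuclideanSpace ℝ (Fin n)} (hx₀ : x₀ ∈ K)
    (c : EuclideanSpace ℝ (Fin n)) (a r : ℝ) (hr0 : 0 < r) (hr1 : r ≤ 1) :
    ∫ x in K, Real.exp (-(r * a * (⟪c, x⟫ - ⟪c, x₀⟫))) ≤
      (r ^ n)⁻¹ * ∫ x in K, Real.exp (-(a * (⟪c, x⟫ - ⟪c, x₀⟫))) := by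
  set e : EuclideanSpace ℝ (Fin n) → ℝ :=
    fun y => Real.exp (-(a * (⟪c, y⟫ - ⟪c, x₀⟫))) with he
  set φ : EuclideanSpace ℝ (Fin n) → EuclideanSpace ℝ (Fin n) :=
    fun x => r • x + (x₀ - r • x₀) with hφ
  have hφg : ∀ x, ⟪c, φ x⟫ - ⟪c, x₀⟫ = r * (⟪c, x⟫ - ⟪c, x₀⟫) := by
    intro x
    simp only [hφ, inner_add_right, inner_sub_right, real_inner_smul_right]
    ring
  have hφK : ∀ x ∈ K, φ x ∈ K := by
    intro x hx
    have h := hKconv hx₀ hx (by linarith : (0:ℝ) ≤ 1 - r) hr0.le (by ring)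
    have heq : φ x = (1 - r) • x₀ + r • x := by
      simp only [hφ, sub_smul, one_smul]
      abel
    rw [heq]; exact h
  have hφinj : Function.Injective φ := by
    intro x y h
    have h2 : r • x = r • y := by simpa only [hφ, add_left_inj] using h
    exact smul_right_injective (EuclideanSpace ℝ (Fin n)) hr0.ne' h2
  have hinner : Continuous fun y : EuclideanSpace ℝ (Fin n) => ⟪c, y⟫ :=
    continuous_const.inner continuous_id
  have hecont : Continuous e :=
    Real.continuous_exp.comp ((continuous_const.mul (hinner.sub continuous_const)).neg)
  have heint : IntegrableOn e K volume :=
    hecont.continuousOn.integrableOn_compact hKcomp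
  have henn : ∀ y, 0 ≤ e y := fun y => (Real.exp_pos _).le
  have step1 : ∫ x in K, Real.exp (-(r * a * (⟪c, x⟫ - ⟪c, x₀⟫))) = ∫ x in K, e (φ x) := by
    refine setIntegral_congr_fun hKcomp.measurableSet fun x _ => ?_
    rw [he]; simp only [hφg]; ring_nf
  have hKm : MeasurableSet K := hKcomp.measurableSet
  have hφcont : Continuous φ := (continuous_id.const_smul r).add continuous_const
  have hφKm : MeasurableSet (φ '' K) := (hKcomp.image hφcont).measurableSet
  have step2 : ∫ x in K, e (φ x) = ∫ x, (φ '' K).indicator e (φ x) := by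
    rw [← integral_indicator hKm]
    congr 1
    funext x
    by_cases hx : x ∈ K
    · simp [Set.indicator_apply, hx, Set.mem_image_of_mem φ hx]
    · simp [Set.indicator_apply, hx, hφinj.mem_set_image]
  have step3 : ∫ x, (φ '' K).indicator e (φ x) =
      (r ^ n)⁻¹ * ∫ y, (φ '' K).indicator e y := by
    have h1 : ∀ x, (φ '' K).indicator e (φ x) =
        (fun y => (φ '' K).indicator e (y + (x₀ - r • x₀))) (r • x) := fun x => rfl
    calc ∫ x, (φ '' K).indicator e (φ x)
        = ∫ x, (fun y => (φ '' K).indicator e (y + (x₀ - r • x₀))) (r • x) := by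
          exact integral_congr_ae (Filter.Eventually.of_forall h1)
      _ = (r ^ Module.finrank ℝ (EuclideanSpace ℝ (Fin n)))⁻¹ •
            ∫ y, (φ '' K).indicator e (y + (x₀ - r • x₀)) :=
          Measure.integral_comp_smul_of_nonneg volume
            (fun y => (φ '' K).indicator e (y + (x₀ - r • x₀))) r (hR := hr0.le)
      _ = (r ^ n)⁻¹ * ∫ y, (φ '' K).indicator e y := by
          rw [integral_add_right_eq_self, finrank_euclideanSpace_fin, smul_eq_mul]
  have step4 : ∫ y, (φ '' K).indicator e y ≤ ∫ y in K, e y := by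
    rw [integral_indicator hφKm]
    exact setIntegral_mono_set heint (Filter.Eventually.of_forall fun y => henn y)
      (Filter.Eventually.of_forall (Set.image_subset_iff.2 hφK))
  calc ∫ x in K, Real.exp (-(r * a * (⟪c, x⟫ - ⟪c, x₀⟫)))
      = (r ^ n)⁻¹ * ∫ y, (φ '' K).indicator e y := by rw [step1, step2, step3]
    _ ≤ (r ^ n)⁻¹ * ∫ y in K, e y :=
        mul_le_mul_of_nonneg_left step4 (by positivity)

lemma bm_exp_bound {n : ℕ} {K : Set (EuclideanSpace ℝ (Fin n))} (hKconv : Convex ℝ K)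
    (hKcomp : IsCompact K) {x₀ : EuclideanSpace ℝ (Fin n)} (hx₀ : x₀ ∈ K)
    (c : EuclideanSpace ℝ (Fin n)) (hmin : ∀ x ∈ K, ⟪c, x₀⟫ ≤ ⟪c, x⟫)
    (a : ℝ) (ha : 0 < a) :
    ∫ x in K, (⟪c, x⟫ - ⟪c, x₀⟫) * Real.exp (-(a * (⟪c, x⟫ - ⟪c, x₀⟫))) ≤
      (n / a) * ∫ x in K, Real.exp (-(a * (⟪c, x⟫ - ⟪c, x₀⟫))) := by
  have hinner : Continuous fun x : EuclideanSpace ℝ (Fin n) => ⟪c, x⟫ :=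
    continuous_const.inner continuous_id
  have hgcont : Continuous fun x : EuclideanSpace ℝ (Fin n) => ⟪c, x⟫ - ⟪c, x₀⟫ :=
    hinner.sub continuous_const
  have hKm := hKcomp.measurableSet
  have hFint : ∀ s : ℝ, IntegrableOn
      (fun x : EuclideanSpace ℝ (Fin n) => Real.exp (-(s * (⟪c, x⟫ - ⟪c, x₀⟫)))) K volume :=
    fun s => (Real.continuous_exp.comp
      ((continuous_const.mul hgcont).neg)).continuousOn.integrableOn_compact hKcomp
  have hHint : IntegrableOn
      (fun x : EuclideanSpace ℝ (Fin n) =>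
        (⟪c, x⟫ - ⟪c, x₀⟫) * Real.exp (-(a * (⟪c, x⟫ - ⟪c, x₀⟫)))) K volume :=
    (hgcont.mul (Real.continuous_exp.comp
      ((continuous_const.mul hgcont).neg))).continuousOn.integrableOn_compact hKcomp
  set J : ℝ → ℝ := fun s => ∫ x in K, Real.exp (-(s * (⟪c, x⟫ - ⟪c, x₀⟫))) with hJdef
  set H : ℝ := ∫ x in K, (⟪c, x⟫ - ⟪c, x₀⟫) * Real.exp (-(a * (⟪c, x⟫ - ⟪c, x₀⟫))) with hHdef
  have claim : ∀ r : ℝ, 0 < r → r < 1 →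
      H ≤ (∑ i ∈ Finset.range n, r ^ i) / (r ^ n * a) * J a := by
    intro r hr0 hr1
    have hscale : J (r * a) ≤ (r ^ n)⁻¹ * J a := by
      have := bm_scale hKconv hKcomp hx₀ c a r hr0 hr1.le
      simpa [hJdef, mul_assoc] using this
    have hpt : ∀ x ∈ K,
        Real.exp (-(a * (⟪c, x⟫ - ⟪c, x₀⟫))) +
          ((1 - r) * a) * ((⟪c, x⟫ - ⟪c, x₀⟫) * Real.exp (-(a * (⟪c, x⟫ - ⟪c, x₀⟫))))
        ≤ Real.exp (-(r * a * (⟪c, x⟫ - ⟪c, x₀⟫))) := by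
      intro x hx
      set u : ℝ := ⟪c, x⟫ - ⟪c, x₀⟫ with hu
      have hu0 : 0 ≤ u := sub_nonneg.2 (hmin x hx)
      have h1 : (1 - r) * a * u + 1 ≤ Real.exp ((1 - r) * a * u) := Real.add_one_le_exp _
      have h2 : Real.exp (-(r * a * u)) =
          Real.exp (-(a * u)) * Real.exp ((1 - r) * a * u) := by
        rw [← Real.exp_add]; ring_nf
      rw [h2]
      nlinarith [Real.exp_pos (-(a * u)), mul_le_mul_of_nonneg_left h1 (Real.exp_pos (-(a * u))).le]
    have hlow : J a + ((1 - r) * a) * H ≤ J (r * a) := by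
      have hmono := setIntegral_mono_on (μ := volume)
        ((hFint a).add (hHint.const_mul ((1 - r) * a))) (hFint (r * a)) hKm hpt
      simp only [Pi.add_apply] at hmono
      rwa [integral_add (hFint a) (hHint.const_mul _), integral_const_mul] at hmono
    have h2 : ((1 - r) * a) * H ≤ ((r ^ n)⁻¹ - 1) * J a := by
      have := hlow.trans hscale
      nlinarith [this]
    have hgeom : (1 : ℝ) - r ^ n = (∑ i ∈ Finset.range n, r ^ i) * (1 - r) := by
      linear_combination geom_sum_mul r n
    have h6 : (1 - r) * (H * (r ^ n * a)) ≤
        (1 - r) * ((∑ i ∈ Finset.range n, r ^ i) * J a) := by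
      have hrn : (0:ℝ) < r ^ n := pow_pos hr0 n
      calc (1 - r) * (H * (r ^ n * a)) = (((1 - r) * a) * H) * r ^ n := by ring
        _ ≤ (((r ^ n)⁻¹ - 1) * J a) * r ^ n := mul_le_mul_of_nonneg_right h2 hrn.le
        _ = (1 - r ^ n) * J a := by field_simp
        _ = (1 - r) * ((∑ i ∈ Finset.range n, r ^ i) * J a) := by rw [hgeom]; ring
    have h7 := le_of_mul_le_mul_left h6 (by linarith : (0:ℝ) < 1 - r)
    rw [div_mul_eq_mul_div, le_div_iff₀ (by positivity : (0:ℝ) < r ^ n * a)]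
    linarith [h7]
  have hB : Tendsto (fun r : ℝ => (∑ i ∈ Finset.range n, r ^ i) / (r ^ n * a) * J a)
      (nhdsWithin 1 (Set.Iio 1)) (nhds ((n / a) * J a)) := by
    have hcont : ContinuousAt (fun r : ℝ => (∑ i ∈ Finset.range n, r ^ i) / (r ^ n * a) * J a) 1 := by
      apply ContinuousAt.mul ?_ continuousAt_const
      apply ContinuousAt.div
      · exact (continuous_finset_sum _ fun i _ => continuous_pow i).continuousAt
      · exact ((continuous_pow n).mul continuous_const).continuousAt
      · simp [ha.ne']
    have hval : (∑ i ∈ Finset.range n, (1:ℝ) ^ i) / ((1:ℝ) ^ n * a) * J a = (n / a) * J a := by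
      simp
    have h8 : Tendsto (fun r : ℝ => (∑ i ∈ Finset.range n, r ^ i) / (r ^ n * a) * J a)
        (nhdsWithin 1 (Set.Iio 1)) (nhds ((∑ i ∈ Finset.range n, (1:ℝ) ^ i) / ((1:ℝ) ^ n * a) * J a)) :=
      hcont.tendsto.mono_left nhdsWithin_le_nhds
    rwa [hval] at h8
  refine ge_of_tendsto hB ?_
  filter_upwards [Ioo_mem_nhdsLT (zero_lt_one)] with r hr
  exact claim r hr.1 hr.2

set_option maxHeartbeats 1000000 in
/-- If `X` has the Boltzmann distribution with density proportional to `exp(-⟨c,x⟩/T)` on a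
convex body `K`, then `P{⟨c,X⟩ - min_K ⟨c,·⟩ > ε̄} ≤ nT/ε̄`. -/
theorem boltzmann_markov_bound {n : ℕ} (K : Set (EuclideanSpace ℝ (Fin n)))
    (hKconv : Convex ℝ K) (hKcomp : IsCompact K) (hKint : (interior K).Nonempty)
    (c : EuclideanSpace ℝ (Fin n)) (hc : ‖c‖ = 1) (T : ℝ) (hT : 0 < T)
    (ε : ℝ) (hε : 0 < ε)
    (μ : Measure (EuclideanSpace ℝ (Fin n)))
    (hμ : μ = (volume.restrict K).withDensity fun x =>
      ENNReal.ofReal (Real.exp (-⟪c, x⟫ / T) / ∫ y in K, Real.exp (-⟪c, y⟫ / T))) :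
    (μ {x | ε < ⟪c, x⟫ - sInf ((fun x => ⟪c, x⟫) '' K)}).toReal ≤ n * T / ε := by
  obtain ⟨z, hz⟩ := hKint
  have hKne : K.Nonempty := ⟨z, interior_subset hz⟩
  have hinner : Continuous fun x : EuclideanSpace ℝ (Fin n) => ⟪c, x⟫ :=
    continuous_const.inner continuous_id
  obtain ⟨x₀, hx₀K, hx₀min'⟩ := hKcomp.exists_isMinOn hKne hinner.continuousOn
  have hmin : ∀ x ∈ K, ⟪c, x₀⟫ ≤ ⟪c, x⟫ := fun x hx => hx₀min' hx
  have hsInf : sInf ((fun x => ⟪c, x⟫) '' K) = ⟪c, x₀⟫ :=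
    IsLeast.csInf_eq ⟨⟨x₀, hx₀K, rfl⟩, by rintro y ⟨x, hx, rfl⟩; exact hmin x hx⟩
  have ha : (0:ℝ) < T⁻¹ := inv_pos.2 hT
  have hgcont : Continuous fun x : EuclideanSpace ℝ (Fin n) => ⟪c, x⟫ - ⟪c, x₀⟫ :=
    hinner.sub continuous_const
  have hKm := hKcomp.measurableSet
  rw [hsInf, hμ]
  set A : Set (EuclideanSpace ℝ (Fin n)) := {x | ε < ⟪c, x⟫ - ⟪c, x₀⟫} with hA
  have hAm : MeasurableSet A := measurableSet_lt measurable_const hgcont.measurable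
  set w : EuclideanSpace ℝ (Fin n) → ℝ := fun x => Real.exp (-⟪c, x⟫ / T) with hw
  set Z : ℝ := ∫ y in K, w y with hZ
  have hwcont : Continuous w := Real.continuous_exp.comp (hinner.neg.div_const T)
  have hwint : IntegrableOn w K volume := hwcont.continuousOn.integrableOn_compact hKcomp
  have hwfac : ∀ x, w x =
      Real.exp (-⟪c, x₀⟫ / T) * Real.exp (-(T⁻¹ * (⟪c, x⟫ - ⟪c, x₀⟫))) := by
    intro x
    have harg : -⟪c, x⟫ / T = -⟪c, x₀⟫ / T + -(T⁻¹ * (⟪c, x⟫ - ⟪c, x₀⟫)) := by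
      field_simp; ring
    show Real.exp (-⟪c, x⟫ / T) = _
    rw [harg, Real.exp_add]
  have hecont : Continuous fun x : EuclideanSpace ℝ (Fin n) =>
      Real.exp (-(T⁻¹ * (⟪c, x⟫ - ⟪c, x₀⟫))) :=
    Real.continuous_exp.comp ((continuous_const.mul hgcont).neg)
  have hFint : IntegrableOn
      (fun x : EuclideanSpace ℝ (Fin n) => Real.exp (-(T⁻¹ * (⟪c, x⟫ - ⟪c, x₀⟫)))) K volume :=
    hecont.continuousOn.integrableOn_compact hKcomp
  have hZfac : Z = Real.exp (-⟪c, x₀⟫ / T) *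
      ∫ x in K, Real.exp (-(T⁻¹ * (⟪c, x⟫ - ⟪c, x₀⟫))) := by
    rw [hZ]
    simp_rw [hwfac]
    exact integral_const_mul _ _
  have hvolpos : 0 < volume K := Measure.measure_pos_of_nonempty_interior _ ⟨z, hz⟩
  have hFpos : 0 < ∫ x in K, Real.exp (-(T⁻¹ * (⟪c, x⟫ - ⟪c, x₀⟫))) := by
    refine (setIntegral_pos_iff_support_of_nonneg_ae
      (Filter.Eventually.of_forall fun x => (Real.exp_pos _).le) hFint).2 ?_
    have hsupp : (Function.support fun x : EuclideanSpace ℝ (Fin n) =>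
        Real.exp (-(T⁻¹ * (⟪c, x⟫ - ⟪c, x₀⟫)))) = Set.univ := by
      ext x; simp [Function.support, (Real.exp_pos _).ne']
    rw [hsupp, Set.univ_inter]; exact hvolpos
  have hZpos : 0 < Z := hZfac ▸ mul_pos (Real.exp_pos _) hFpos
  have hAKm : MeasurableSet (A ∩ K) := hAm.inter hKm
  have hμA : ((volume.restrict K).withDensity fun x => ENNReal.ofReal (w x / Z)) A
      = ENNReal.ofReal (∫ x in A ∩ K, w x / Z) := by
    rw [withDensity_apply _ hAm, Measure.restrict_restrict hAm,
      ofReal_integral_eq_lintegral_ofReal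
        ((hwint.mono_set Set.inter_subset_right).div_const Z)
        (Filter.Eventually.of_forall fun x => div_nonneg (Real.exp_pos _).le hZpos.le)]
  have hgw_int : IntegrableOn
      (fun x : EuclideanSpace ℝ (Fin n) => (⟪c, x⟫ - ⟪c, x₀⟫) * w x / (ε * Z)) K volume :=
    ((hgcont.mul hwcont).div_const _).continuousOn.integrableOn_compact hKcomp
  have step1 : ∫ x in A ∩ K, w x / Z ≤
      ∫ x in A ∩ K, (⟪c, x⟫ - ⟪c, x₀⟫) * w x / (ε * Z) := by
    refine setIntegral_mono_on ((hwint.mono_set Set.inter_subset_right).div_const Z)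
      (hgw_int.mono_set Set.inter_subset_right) hAKm fun x hx => ?_
    have hxA : ε < ⟪c, x⟫ - ⟪c, x₀⟫ := hx.1
    have hwpos : 0 < w x := Real.exp_pos _
    rw [div_le_div_iff₀ hZpos (by positivity)]
    nlinarith [mul_pos hwpos hZpos]
  have step2 : ∫ x in A ∩ K, (⟪c, x⟫ - ⟪c, x₀⟫) * w x / (ε * Z) ≤
      ∫ x in K, (⟪c, x⟫ - ⟪c, x₀⟫) * w x / (ε * Z) := by
    refine setIntegral_mono_set hgw_int ?_
      (Filter.Eventually.of_forall Set.inter_subset_right)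
    refine (ae_restrict_iff' hKm).2 (Filter.Eventually.of_forall fun x hx => ?_)
    have h0 : 0 ≤ ⟪c, x⟫ - ⟪c, x₀⟫ := sub_nonneg.2 (hmin x hx)
    have hwpos : (0:ℝ) < w x := Real.exp_pos _
    positivity
  have step3 : ∫ x in K, (⟪c, x⟫ - ⟪c, x₀⟫) * w x / (ε * Z) =
      Real.exp (-⟪c, x₀⟫ / T) / (ε * Z) *
        ∫ x in K, (⟪c, x⟫ - ⟪c, x₀⟫) * Real.exp (-(T⁻¹ * (⟪c, x⟫ - ⟪c, x₀⟫))) := by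
    conv_rhs => rw [← integral_const_mul]
    refine setIntegral_congr_fun hKm fun x hx => ?_
    rw [hwfac x]; ring
  have hexp := bm_exp_bound hKconv hKcomp hx₀K c hmin T⁻¹ ha
  rw [hμA, ENNReal.toReal_ofReal
    (setIntegral_nonneg hAKm fun x _ => div_nonneg (Real.exp_pos _).le hZpos.le)]
  have hconst : (0:ℝ) ≤ Real.exp (-⟪c, x₀⟫ / T) / (ε * Z) := by positivity
  calc ∫ x in A ∩ K, w x / Z
      ≤ ∫ x in K, (⟪c, x⟫ - ⟪c, x₀⟫) * w x / (ε * Z) := step1.trans step2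
    _ = Real.exp (-⟪c, x₀⟫ / T) / (ε * Z) *
        ∫ x in K, (⟪c, x⟫ - ⟪c, x₀⟫) * Real.exp (-(T⁻¹ * (⟪c, x⟫ - ⟪c, x₀⟫))) := step3
    _ ≤ Real.exp (-⟪c, x₀⟫ / T) / (ε * Z) *
        ((n / T⁻¹) * ∫ x in K, Real.exp (-(T⁻¹ * (⟪c, x⟫ - ⟪c, x₀⟫)))) :=
        mul_le_mul_of_nonneg_left hexp hconst
    _ = n * T / ε := by
        rw [hZfac]
        set e := Real.exp (-⟪c, x₀⟫ / T) with he'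
        set F := ∫ x in K, Real.exp (-(T⁻¹ * (⟪c, x⟫ - ⟪c, x₀⟫))) with hF'
        have he : (0:ℝ) < e := Real.exp_pos _
        have hFne : F ≠ 0 := hFpos.ne'
        field_simp
end

section
/- For the unit ball B_n in ℝⁿ and any θ ∈ ℝⁿ, the quantity ⟨θ, Σ(θ)θ⟩ (where Σ(θ) is the covariance of the Boltzmann distribution with parameter θ on B_n) equals ‖θ‖² E[Y₁²] − (‖θ‖ E[Y₁])², where Y₁ has density on [−1,1] proportional to t ↦ (1−t²)^{(n−1)/2} e^{‖θ‖ t}; i.e., the problem reduces by rotational symmetry to a one-dimensional integral. -/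
/-!
A reflection of `ℝⁿ` carrying `‖θ‖ e₀` to `θ` preserves the unit ball and Lebesgue measure and
turns `⟪θ, x⟫` into `‖θ‖ x₀`, so every integral of a function of `⟪θ, x⟫` over the ball is one of
a function of `x₀`. Splitting `ℝⁿ = ℝ × ℝⁿ⁻¹` and applying Fubini, the slice of the ball at height
`t` is a ball of radius `√(1 - t²)`, of volume `(1 - t²)^((n-1)/2)` times that of the unit ball
of `ℝⁿ⁻¹`. This common factor cancels in the ratios defining the mean and second moment.
-/

open MeasureTheory Metric Set
open scoped RealInnerProductSpace

namespace EuclideanSpace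

def consMeasurableEquiv (m : ℕ) :
    ℝ × EuclideanSpace ℝ (Fin m) ≃ᵐ EuclideanSpace ℝ (Fin (m + 1)) :=
  ((MeasurableEquiv.refl ℝ).prodCongr (MeasurableEquiv.toLp 2 (Fin m → ℝ)).symm).trans
    ((MeasurableEquiv.piFinSuccAbove (fun _ => ℝ) 0).symm.trans
      (MeasurableEquiv.toLp 2 (Fin (m + 1) → ℝ)))

variable {m : ℕ}

theorem consMeasurableEquiv_apply_zero (p : ℝ × EuclideanSpace ℝ (Fin m)) :
    consMeasurableEquiv m p 0 = p.1 :=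
  rfl

theorem consMeasurableEquiv_apply_succ (p : ℝ × EuclideanSpace ℝ (Fin m)) (i : Fin m) :
    consMeasurableEquiv m p i.succ = p.2 i :=
  rfl

theorem norm_consMeasurableEquiv_sq (p : ℝ × EuclideanSpace ℝ (Fin m)) :
    ‖consMeasurableEquiv m p‖ ^ 2 = p.1 ^ 2 + ‖p.2‖ ^ 2 := by
  simp [norm_sq_eq, Fin.sum_univ_succ, consMeasurableEquiv_apply_zero,
    consMeasurableEquiv_apply_succ]

theorem consMeasurableEquiv_preimage_closedBall :
    consMeasurableEquiv m ⁻¹' closedBall 0 1 = {p | p.1 ^ 2 + ‖p.2‖ ^ 2 ≤ 1} := by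
  ext p
  simp only [mem_preimage, mem_closedBall_zero_iff, mem_ofPred_eq, ← norm_consMeasurableEquiv_sq]
  exact (sq_le_one_iff₀ (norm_nonneg _)).symm

theorem volume_preserving_consMeasurableEquiv (m : ℕ) :
    MeasurePreserving (consMeasurableEquiv m) :=
  (PiLp.volume_preserving_toLp (Fin (m + 1))).comp
    ((volume_preserving_piFinSuccAbove (fun _ : Fin (m + 1) => ℝ) 0).symm.comp
      ((MeasurePreserving.id volume).prod (PiLp.volume_preserving_ofLp (Fin m))))

theorem measureReal_setOf_sq_add_norm_sq_le_one (t : ℝ) :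
    volume.real {z : EuclideanSpace ℝ (Fin m) | t ^ 2 + ‖z‖ ^ 2 ≤ 1} =
      (Icc (-1) 1).indicator (fun t => (1 - t ^ 2) ^ ((m : ℝ) / 2)) t *
        volume.real (closedBall (0 : EuclideanSpace ℝ (Fin m)) 1) := by
  by_cases ht : t ∈ Icc (-1 : ℝ) 1
  · have h1 : 0 ≤ 1 - t ^ 2 := by nlinarith [ht.1, ht.2]
    have hslice : {z : EuclideanSpace ℝ (Fin m) | t ^ 2 + ‖z‖ ^ 2 ≤ 1} =
        closedBall 0 √(1 - t ^ 2) := by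
      ext z
      rw [mem_ofPred_eq, mem_closedBall_zero_iff, Real.le_sqrt (norm_nonneg z) h1]
      constructor <;> intro <;> linarith
    rw [hslice, Measure.addHaar_real_closedBall' _ _ (Real.sqrt_nonneg _),
      indicator_of_mem ht, finrank_euclideanSpace_fin, Real.sqrt_eq_rpow,
      ← Real.rpow_natCast, ← Real.rpow_mul h1, one_div_mul_eq_div]
  · have hslice : {z : EuclideanSpace ℝ (Fin m) | t ^ 2 + ‖z‖ ^ 2 ≤ 1} = ∅ := by
      have : 1 < t ^ 2 := by
        simp only [mem_Icc, not_and_or, not_le] at ht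
        rcases ht with h | h <;> nlinarith
      ext z
      simp only [mem_ofPred_eq, mem_empty_iff_false, iff_false, not_le]
      nlinarith [sq_nonneg ‖z‖]
    rw [hslice, indicator_of_notMem ht, measureReal_empty, zero_mul]

theorem setIntegral_unitClosedBall_comp_apply_zero (f : ℝ → ℝ) (hf : Continuous f) :
    ∫ x in closedBall (0 : EuclideanSpace ℝ (Fin (m + 1))) 1, f (x 0) =
      volume.real (closedBall (0 : EuclideanSpace ℝ (Fin m)) 1) *
        ∫ t in Icc (-1) 1, (1 - t ^ 2) ^ ((m : ℝ) / 2) * f t := by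
  set S : Set (ℝ × EuclideanSpace ℝ (Fin m)) := {p | p.1 ^ 2 + ‖p.2‖ ^ 2 ≤ 1}
  have hS : MeasurableSet S := (isClosed_le (by fun_prop) continuous_const).measurableSet
  have hSint : Integrable (S.indicator fun p => f p.1) := by
    have hball : IntegrableOn (fun x : EuclideanSpace ℝ (Fin (m + 1)) => f (x 0))
        (closedBall 0 1) :=
      (hf.comp (by fun_prop)).continuousOn.integrableOn_compact (isCompact_closedBall 0 1)
    rw [integrable_indicator_iff hS]
    simpa [Function.comp_def, consMeasurableEquiv_apply_zero,
      consMeasurableEquiv_preimage_closedBall] using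
      ((volume_preserving_consMeasurableEquiv m).integrableOn_comp_preimage
        (consMeasurableEquiv m).measurableEmbedding).2 hball
  have hslice (t : ℝ) : ∫ z, S.indicator (fun p => f p.1) (t, z) =
      volume.real (closedBall (0 : EuclideanSpace ℝ (Fin m)) 1) *
        (Icc (-1) 1).indicator (fun t => (1 - t ^ 2) ^ ((m : ℝ) / 2) * f t) t := by
    change ∫ z, {z : EuclideanSpace ℝ (Fin m) | t ^ 2 + ‖z‖ ^ 2 ≤ 1}.indicator (fun _ => f t) z = _
    rw [integral_indicator_const _ (isClosed_le (by fun_prop) continuous_const).measurableSet,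
      measureReal_setOf_sq_add_norm_sq_le_one, smul_eq_mul]
    by_cases ht : t ∈ Icc (-1 : ℝ) 1
    · simp only [indicator_of_mem ht]; ring
    · simp only [indicator_of_notMem ht]; ring
  calc ∫ x in closedBall (0 : EuclideanSpace ℝ (Fin (m + 1))) 1, f (x 0)
      = ∫ p in S, f p.1 := by
        rw [← (volume_preserving_consMeasurableEquiv m).setIntegral_preimage_emb
          (consMeasurableEquiv m).measurableEmbedding, consMeasurableEquiv_preimage_closedBall]
        rfl
    _ = ∫ t, ∫ z, S.indicator (fun p => f p.1) (t, z) := by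
        rw [← integral_indicator hS, Measure.volume_eq_prod, integral_prod _ hSint]
    _ = _ := by
        simp_rw [hslice, integral_const_mul, integral_indicator measurableSet_Icc]

end EuclideanSpace

section Rotation

variable {F : Type*} [NormedAddCommGroup F] [InnerProductSpace ℝ F]

theorem exists_linearIsometryEquiv_inner_map_eq (θ : F) {e : F} (he : ‖e‖ = 1) :
    ∃ Q : F ≃ₗᵢ[ℝ] F, ∀ y, ⟪θ, Q y⟫ = ‖θ‖ * ⟪e, y⟫ := by
  set Q := Submodule.reflection (ℝ ∙ (‖θ‖ • e - θ))ᗮ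
  have hQ : Q (‖θ‖ • e) = θ := Submodule.reflection_sub (by simp [norm_smul, he])
  refine ⟨Q, fun y => ?_⟩
  calc ⟪θ, Q y⟫ = ⟪Q (‖θ‖ • e), Q y⟫ := by rw [hQ]
    _ = ‖θ‖ * ⟪e, y⟫ := by rw [Q.inner_map_map, real_inner_smul_left]

variable [FiniteDimensional ℝ F] [MeasurableSpace F] [BorelSpace F]

theorem setIntegral_closedBall_comp_inner (f : ℝ → ℝ) (θ : F) {e : F} (he : ‖e‖ = 1) (r : ℝ) :
    ∫ x in closedBall 0 r, f ⟪θ, x⟫ = ∫ x in closedBall 0 r, f (‖θ‖ * ⟪e, x⟫) := by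
  obtain ⟨Q, hQ⟩ := exists_linearIsometryEquiv_inner_map_eq θ he
  have hpre : Q ⁻¹' closedBall 0 r = closedBall 0 r := by
    ext y; simp
  rw [← Q.measurePreserving.setIntegral_preimage_emb Q.toHomeomorph.measurableEmbedding, hpre]
  simp_rw [hQ]

end Rotation

namespace EuclideanSpace

variable {m : ℕ}

theorem setIntegral_unitClosedBall_comp_inner (f : ℝ → ℝ) (hf : Continuous f)
    (θ : EuclideanSpace ℝ (Fin (m + 1))) :
    ∫ x in closedBall 0 1, f ⟪θ, x⟫ =
      volume.real (closedBall (0 : EuclideanSpace ℝ (Fin m)) 1) *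
        ∫ t in Icc (-1) 1, (1 - t ^ 2) ^ ((m : ℝ) / 2) * f (‖θ‖ * t) := by
  rw [setIntegral_closedBall_comp_inner f θ (e := single 0 1) (by simp)]
  simp_rw [inner_single_left, map_one, one_mul]
  exact setIntegral_unitClosedBall_comp_apply_zero (fun t => f (‖θ‖ * t)) (by fun_prop)

theorem setIntegral_unitClosedBall_inner_pow_mul_exp (k : ℕ)
    (θ : EuclideanSpace ℝ (Fin (m + 1))) :
    ∫ x in closedBall 0 1, ⟪θ, x⟫ ^ k * Real.exp ⟪θ, x⟫ =
      volume.real (closedBall (0 : EuclideanSpace ℝ (Fin m)) 1) *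
        (‖θ‖ ^ k *
          ∫ t in Icc (-1) 1, t ^ k * (1 - t ^ 2) ^ ((m : ℝ) / 2) * Real.exp (‖θ‖ * t)) := by
  rw [setIntegral_unitClosedBall_comp_inner (fun s => s ^ k * Real.exp s) (by fun_prop),
    ← integral_const_mul (‖θ‖ ^ k)]
  congr 1
  exact setIntegral_congr_fun measurableSet_Icc fun t _ => by ring

end EuclideanSpace

theorem unit_ball_boltzmann_variance_reduction_general {n : ℕ}
    (θ : EuclideanSpace ℝ (Fin n)) :
    (∫ x in Metric.closedBall (0 : EuclideanSpace ℝ (Fin n)) 1,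
          ⟪θ, x⟫ ^ 2 * Real.exp ⟪θ, x⟫) /
        (∫ x in Metric.closedBall (0 : EuclideanSpace ℝ (Fin n)) 1, Real.exp ⟪θ, x⟫)
      - ((∫ x in Metric.closedBall (0 : EuclideanSpace ℝ (Fin n)) 1,
            ⟪θ, x⟫ * Real.exp ⟪θ, x⟫) /
          (∫ x in Metric.closedBall (0 : EuclideanSpace ℝ (Fin n)) 1, Real.exp ⟪θ, x⟫)) ^ 2
    = ‖θ‖ ^ 2 *
        ((∫ t in Set.Icc (-1 : ℝ) 1,
            t ^ 2 * (1 - t ^ 2) ^ (((n : ℝ) - 1) / 2) * Real.exp (‖θ‖ * t)) /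
          (∫ t in Set.Icc (-1 : ℝ) 1,
            (1 - t ^ 2) ^ (((n : ℝ) - 1) / 2) * Real.exp (‖θ‖ * t)))
      - (‖θ‖ *
          ((∫ t in Set.Icc (-1 : ℝ) 1,
              t * (1 - t ^ 2) ^ (((n : ℝ) - 1) / 2) * Real.exp (‖θ‖ * t)) /
            (∫ t in Set.Icc (-1 : ℝ) 1,
              (1 - t ^ 2) ^ (((n : ℝ) - 1) / 2) * Real.exp (‖θ‖ * t)))) ^ 2 := by
  cases n with
  | zero =>
    obtain rfl := Subsingleton.elim θ 0
    simp
  | succ m =>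
    have hC : volume.real (closedBall (0 : EuclideanSpace ℝ (Fin m)) 1) ≠ 0 :=
      (ENNReal.toReal_pos (measure_closedBall_pos volume 0 one_pos).ne'
        measure_closedBall_lt_top.ne).ne'
    have h0 := EuclideanSpace.setIntegral_unitClosedBall_inner_pow_mul_exp 0 θ
    have h1 := EuclideanSpace.setIntegral_unitClosedBall_inner_pow_mul_exp 1 θ
    simp only [pow_zero, pow_one, one_mul] at h0 h1
    rw [show ((m + 1 : ℕ) - 1 : ℝ) / 2 = m / 2 by push_cast; ring, h0, h1,
      EuclideanSpace.setIntegral_unitClosedBall_inner_pow_mul_exp 2 θ, mul_div_mul_left _ _ hC,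
      mul_div_mul_left _ _ hC, mul_div_assoc, mul_div_assoc]

/-- For the Boltzmann distribution on the unit ball `B_n`, the quantity `⟨θ, Σ(θ)θ⟩` reduces by
rotational symmetry to one-dimensional integrals: it equals `‖θ‖² E[Y₁²] - (‖θ‖ E[Y₁])²` where
`Y₁` has density proportional to `(1 - t²)^{(n-1)/2} e^{‖θ‖ t}` on `[-1, 1]`. -/
theorem unit_ball_boltzmann_variance_reduction {n : ℕ} (hn : 1 ≤ n)
    (θ : EuclideanSpace ℝ (Fin n)) :
    (∫ x in Metric.closedBall (0 : EuclideanSpace ℝ (Fin n)) 1,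
          ⟪θ, x⟫ ^ 2 * Real.exp ⟪θ, x⟫) /
        (∫ x in Metric.closedBall (0 : EuclideanSpace ℝ (Fin n)) 1, Real.exp ⟪θ, x⟫)
      - ((∫ x in Metric.closedBall (0 : EuclideanSpace ℝ (Fin n)) 1,
            ⟪θ, x⟫ * Real.exp ⟪θ, x⟫) /
          (∫ x in Metric.closedBall (0 : EuclideanSpace ℝ (Fin n)) 1, Real.exp ⟪θ, x⟫)) ^ 2
    = ‖θ‖ ^ 2 *
        ((∫ t in Set.Icc (-1 : ℝ) 1,
            t ^ 2 * (1 - t ^ 2) ^ (((n : ℝ) - 1) / 2) * Real.exp (‖θ‖ * t)) /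
          (∫ t in Set.Icc (-1 : ℝ) 1,
            (1 - t ^ 2) ^ (((n : ℝ) - 1) / 2) * Real.exp (‖θ‖ * t)))
      - (‖θ‖ *
          ((∫ t in Set.Icc (-1 : ℝ) 1,
              t * (1 - t ^ 2) ^ (((n : ℝ) - 1) / 2) * Real.exp (‖θ‖ * t)) /
            (∫ t in Set.Icc (-1 : ℝ) 1,
              (1 - t ^ 2) ^ (((n : ℝ) - 1) / 2) * Real.exp (‖θ‖ * t)))) ^ 2 :=
  unit_ball_boltzmann_variance_reduction_general θ
end
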